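/- For every finitely branching interpretation I, the L_Φ-equivalence relation ≡_{Φ,I} on Δ^I (x ≡ x' iff x and x' satisfy the same L_Φ-concepts) coincides with the largest L_Φ-auto-bisimulation ∼_{Φ,I} of I. -/

import Mathlib

/-- A set of DL-features (subset of {I, O, Q, U, Self}). -/
structure DLFeat where
  hasI : Bool
  hasO : Bool
  hasQ : Bool
  hasU : Bool
  hasSelf : Bool

/-- An interpretation with concept names `CN`, role names `RN`, individual names `IN`
and domain `D`. -/
structure Interp (CN RN IN : Type) (D : Type) where
  cInt : CN → Set D
  rInt : RN → D → D → Prop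
  iInt : IN → D

/-- Interpretation of a basic role: a role name, possibly inverted. -/
def brInt {CN RN IN D : Type} (I : Interp CN RN IN D) (R : RN × Bool) (x y : D) : Prop :=
  if R.2 then I.rInt R.1 y x else I.rInt R.1 x y

mutual
/-- Concepts of the full language (membership in `L_Φ` is a separate predicate). -/
inductive DLConcept (CN RN IN : Type) : Type where
  | atom (A : CN)
  | top
  | bot
  | neg (C : DLConcept CN RN IN)
  | conj (C D : DLConcept CN RN IN)
  | disj (C D : DLConcept CN RN IN)
  | all (R : DLRole CN RN IN) (C : DLConcept CN RN IN)
  | ex (R : DLRole CN RN IN) (C : DLConcept CN RN IN)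
  | nom (a : IN)
  | atLeast (n : ℕ) (r : RN) (inverted : Bool) (C : DLConcept CN RN IN)
  | atMost (n : ℕ) (r : RN) (inverted : Bool) (C : DLConcept CN RN IN)
  | exSelf (r : RN)
/-- Roles of the full language. -/
inductive DLRole (CN RN IN : Type) : Type where
  | name (r : RN)
  | eps
  | comp (R S : DLRole CN RN IN)
  | runion (R S : DLRole CN RN IN)
  | star (R : DLRole CN RN IN)
  | test (C : DLConcept CN RN IN)
  | inv (r : RN)
  | univ
end

mutual
/-- The concept belongs to the language `L_Φ`. -/
def DLConcept.inL {CN RN IN : Type} (Φ : DLFeat) : DLConcept CN RN IN → Prop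
  | .atom _ => True
  | .top => True
  | .bot => True
  | .neg C => C.inL Φ
  | .conj C D => C.inL Φ ∧ D.inL Φ
  | .disj C D => C.inL Φ ∧ D.inL Φ
  | .all R C => R.inL Φ ∧ C.inL Φ
  | .ex R C => R.inL Φ ∧ C.inL Φ
  | .nom _ => Φ.hasO = true
  | .atLeast _ _ b C => Φ.hasQ = true ∧ (b = true → Φ.hasI = true) ∧ C.inL Φ
  | .atMost _ _ b C => Φ.hasQ = true ∧ (b = true → Φ.hasI = true) ∧ C.inL Φ
  | .exSelf _ => Φ.hasSelf = true
/-- The role belongs to the language `L_Φ`. -/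
def DLRole.inL {CN RN IN : Type} (Φ : DLFeat) : DLRole CN RN IN → Prop
  | .name _ => True
  | .eps => True
  | .comp R S => R.inL Φ ∧ S.inL Φ
  | .runion R S => R.inL Φ ∧ S.inL Φ
  | .star R => R.inL Φ
  | .test C => C.inL Φ
  | .inv _ => Φ.hasI = true
  | .univ => Φ.hasU = true
end

mutual
/-- Semantics of concepts. -/
def DLConcept.sem {CN RN IN D : Type} (I : Interp CN RN IN D) : DLConcept CN RN IN → Set D
  | .atom A => I.cInt A
  | .top => Set.univ
  | .bot => ∅
  | .neg C => (DLConcept.sem I C)ᶜ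
  | .conj C C' => DLConcept.sem I C ∩ DLConcept.sem I C'
  | .disj C C' => DLConcept.sem I C ∪ DLConcept.sem I C'
  | .all R C => {x | ∀ y, DLRole.sem I R x y → y ∈ DLConcept.sem I C}
  | .ex R C => {x | ∃ y, DLRole.sem I R x y ∧ y ∈ DLConcept.sem I C}
  | .nom a => {I.iInt a}
  | .atLeast n r b C =>
      {x | (n : Cardinal) ≤ Cardinal.mk {y // brInt I (r, b) x y ∧ y ∈ DLConcept.sem I C}}
  | .atMost n r b C =>
      {x | Cardinal.mk {y // brInt I (r, b) x y ∧ y ∈ DLConcept.sem I C} ≤ (n : Cardinal)}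
  | .exSelf r => {x | I.rInt r x x}
/-- Semantics of roles. -/
def DLRole.sem {CN RN IN D : Type} (I : Interp CN RN IN D) : DLRole CN RN IN → D → D → Prop
  | .name r => I.rInt r
  | .eps => Eq
  | .comp R S => Relation.Comp (DLRole.sem I R) (DLRole.sem I S)
  | .runion R S => fun x y => DLRole.sem I R x y ∨ DLRole.sem I S x y
  | .star R => Relation.ReflTransGen (DLRole.sem I R)
  | .test C => fun x y => x = y ∧ x ∈ DLConcept.sem I C
  | .inv r => fun x y => I.rInt r y x
  | .univ => fun _ _ => True
end

/-- `Z` is an `L_Φ`-bisimulation between `I` and `I'`. -/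
def Bisim {CN RN IN D D' : Type} (Φ : DLFeat) (I : Interp CN RN IN D)
    (I' : Interp CN RN IN D') (Z : D → D' → Prop) : Prop :=
  (∀ a : IN, Z (I.iInt a) (I'.iInt a)) ∧
  (∀ (A : CN) x x', Z x x' → (x ∈ I.cInt A ↔ x' ∈ I'.cInt A)) ∧
  (∀ (r : RN) x x' y, Z x x' → I.rInt r x y → ∃ y', Z y y' ∧ I'.rInt r x' y') ∧
  (∀ (r : RN) x x' y', Z x x' → I'.rInt r x' y' → ∃ y, Z y y' ∧ I.rInt r x y) ∧
  (Φ.hasI = true →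
    (∀ (r : RN) x x' y, Z x x' → I.rInt r y x → ∃ y', Z y y' ∧ I'.rInt r y' x') ∧
    (∀ (r : RN) x x' y', Z x x' → I'.rInt r y' x' → ∃ y, Z y y' ∧ I.rInt r y x)) ∧
  (Φ.hasO = true → ∀ (a : IN) x x', Z x x' → (x = I.iInt a ↔ x' = I'.iInt a)) ∧
  (Φ.hasQ = true → ∀ (r : RN) x x', Z x x' →
    ∃ h : {y // I.rInt r x y} ≃ {y' // I'.rInt r x' y'}, ∀ y, Z y.1 (h y).1) ∧
  (Φ.hasQ = true → Φ.hasI = true → ∀ (r : RN) x x', Z x x' →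
    ∃ h : {y // I.rInt r y x} ≃ {y' // I'.rInt r y' x'}, ∀ y, Z y.1 (h y).1) ∧
  (Φ.hasU = true → (∀ x, ∃ x', Z x x') ∧ (∀ x', ∃ x, Z x x')) ∧
  (Φ.hasSelf = true → ∀ (r : RN) x x', Z x x' → (I.rInt r x x ↔ I'.rInt r x' x'))

/-- One step along a basic role (role name, or inverse of a role name if `I ∈ Φ`). -/
def basicStep {CN RN IN D : Type} (Φ : DLFeat) (I : Interp CN RN IN D) (x y : D) : Prop :=
  ∃ r : RN, I.rInt r x y ∨ (Φ.hasI = true ∧ I.rInt r y x)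

/-- `I` is unreachable-objects-free: every element is reachable from some named
individual via a finite path of basic-role edges. -/
def UOF {CN RN IN D : Type} (Φ : DLFeat) (I : Interp CN RN IN D) : Prop :=
  ∀ x : D, ∃ a : IN, Relation.ReflTransGen (basicStep Φ I) (I.iInt a) x

/-- `I` validates the GCI `C ⊑ C'`. -/
def satGCI {CN RN IN D : Type} (I : Interp CN RN IN D) (C C' : DLConcept CN RN IN) : Prop :=
  DLConcept.sem I C ⊆ DLConcept.sem I C'

/-- `I` is a model of the TBox `T`. -/
def modelsTBox {CN RN IN D : Type} (I : Interp CN RN IN D)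
    (T : Set (DLConcept CN RN IN × DLConcept CN RN IN)) : Prop :=
  ∀ p ∈ T, satGCI I p.1 p.2

/-- Individual assertions. -/
inductive Assertion (CN RN IN : Type) : Type where
  | conc (C : DLConcept CN RN IN) (a : IN)
  | rolePos (R : DLRole CN RN IN) (a b : IN)
  | roleNeg (R : DLRole CN RN IN) (a b : IN)
  | eq (a b : IN)
  | neq (a b : IN)

/-- The assertion belongs to `L_Φ`. -/
def Assertion.inL {CN RN IN : Type} (Φ : DLFeat) : Assertion CN RN IN → Prop
  | .conc C _ => C.inL Φ
  | .rolePos R _ _ => R.inL Φ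
  | .roleNeg R _ _ => R.inL Φ
  | .eq _ _ => True
  | .neq _ _ => True

/-- `I` satisfies the individual assertion. -/
def Assertion.sat {CN RN IN D : Type} (I : Interp CN RN IN D) : Assertion CN RN IN → Prop
  | .conc C a => I.iInt a ∈ DLConcept.sem I C
  | .rolePos R a b => DLRole.sem I R (I.iInt a) (I.iInt b)
  | .roleNeg R a b => ¬ DLRole.sem I R (I.iInt a) (I.iInt b)
  | .eq a b => I.iInt a = I.iInt b
  | .neq a b => I.iInt a ≠ I.iInt b

/-- `I` is a model of the ABox `A`. -/
def modelsABox {CN RN IN D : Type} (I : Interp CN RN IN D) (A : Set (Assertion CN RN IN)) : Prop :=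
  ∀ φ ∈ A, φ.sat I

/-- A role axiom `R₁ ∘ … ∘ R_k ⊑ r` (`ε ⊑ r` when the list is empty), the `R_i` basic roles. -/
structure RoleAx (RN : Type) where
  lhs : List (RN × Bool)
  rhs : RN

/-- The role axiom is in `L_Φ` (inverse basic roles only if `I ∈ Φ`). -/
def RoleAx.inL {RN : Type} (Φ : DLFeat) (ax : RoleAx RN) : Prop :=
  ∀ p ∈ ax.lhs, p.2 = true → Φ.hasI = true

/-- Interpretation of a composition chain of basic roles (`ε` for the empty chain). -/
def chainInt {CN RN IN D : Type} (I : Interp CN RN IN D) : List (RN × Bool) → D → D → Prop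
  | [] => Eq
  | R :: l => fun x z => ∃ y, brInt I R x y ∧ chainInt I l y z

/-- `I` validates the role axiom. -/
def satRoleAx {CN RN IN D : Type} (I : Interp CN RN IN D) (ax : RoleAx RN) : Prop :=
  ∀ x y, chainInt I ax.lhs x y → I.rInt ax.rhs x y

/-- `I` is a model of the RBox `R`. -/
def modelsRBox {CN RN IN D : Type} (I : Interp CN RN IN D) (R : Set (RoleAx RN)) : Prop :=
  ∀ ax ∈ R, satRoleAx I ax

/-- `I'` is an r-extension of `I`. -/
def RExt {CN RN IN D : Type} (I I' : Interp CN RN IN D) : Prop :=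
  I'.cInt = I.cInt ∧ I'.iInt = I.iInt ∧ ∀ (r : RN) x y, I.rInt r x y → I'.rInt r x y

/-- `I'` is the least r-extension of `I` validating the RBox `R`. -/
def LeastRExt {CN RN IN D : Type} (I : Interp CN RN IN D) (R : Set (RoleAx RN))
    (I' : Interp CN RN IN D) : Prop :=
  RExt I I' ∧ modelsRBox I' R ∧
    ∀ I'' : Interp CN RN IN D, RExt I I'' → modelsRBox I'' R →
      ∀ (r : RN) x y, I'.rInt r x y → I''.rInt r x y

/-- `I` is finitely branching w.r.t. `L_Φ`. -/
def FinBranch {CN RN IN D : Type} (Φ : DLFeat) (I : Interp CN RN IN D) : Prop :=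
  ∀ (r : RN) (x : D), {y | I.rInt r x y}.Finite ∧ (Φ.hasI = true → {y | I.rInt r y x}.Finite)

/-- `x` and `x'` are `L_Φ`-equivalent: they satisfy the same concepts of `L_Φ`. -/
def LEquiv {CN RN IN D D' : Type} (Φ : DLFeat) (I : Interp CN RN IN D)
    (I' : Interp CN RN IN D') (x : D) (x' : D') : Prop :=
  ∀ C : DLConcept CN RN IN, C.inL Φ → (x ∈ DLConcept.sem I C ↔ x' ∈ DLConcept.sem I' C)

/-- The largest `L_Φ`-auto-bisimulation of `I` (union of all auto-bisimulations). -/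
def gbisim {CN RN IN D : Type} (Φ : DLFeat) (I : Interp CN RN IN D) (x y : D) : Prop :=
  ∃ Z, Bisim Φ I I Z ∧ Z x y

/-- The quotient interpretation of `I` w.r.t. the largest `L_Φ`-auto-bisimulation. -/
def quotInterp {CN RN IN D : Type} (Φ : DLFeat) (I : Interp CN RN IN D) :
    Interp CN RN IN (Quot (gbisim Φ I)) where
  cInt A := {q | ∃ x, Quot.mk _ x = q ∧ x ∈ I.cInt A}
  rInt r q q' := ∃ x y, Quot.mk _ x = q ∧ Quot.mk _ y = q' ∧ I.rInt r x y
  iInt a := Quot.mk _ (I.iInt a)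

/-- A QS-interpretation: an interpretation together with multiplicity functions for
basic roles and self-loop sets for role names. -/
structure QSInterp (CN RN IN D : Type) where
  toInterp : Interp CN RN IN D
  QU : (RN × Bool) → D → D → ℕ
  SE : RN → Set D

/-- The defining positivity condition of QS-interpretations:
`QU R x y > 0` iff `R` connects `x` to `y`. -/
def QSInterp.Proper {CN RN IN D : Type} (J : QSInterp CN RN IN D) : Prop :=
  ∀ (R : RN × Bool) x y, 0 < J.QU R x y ↔ brInt J.toInterp R x y

/-- `Σ {f y : y ∈ S}` as an extended natural number. -/
noncomputable def qsum {D : Type} (f : D → ℕ) (S : Set D) : ℕ∞ :=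
  ⨆ (s : Finset D) (_ : ↑s ⊆ S), (∑ y ∈ s, f y : ℕ∞)

mutual
/-- Semantics of concepts in a QS-interpretation. -/
noncomputable def DLConcept.qsem {CN RN IN D : Type} (J : QSInterp CN RN IN D) :
    DLConcept CN RN IN → Set D
  | .atom A => J.toInterp.cInt A
  | .top => Set.univ
  | .bot => ∅
  | .neg C => (DLConcept.qsem J C)ᶜ
  | .conj C C' => DLConcept.qsem J C ∩ DLConcept.qsem J C'
  | .disj C C' => DLConcept.qsem J C ∪ DLConcept.qsem J C'
  | .all R C => {x | ∀ y, DLRole.qsem J R x y → y ∈ DLConcept.qsem J C}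
  | .ex R C => {x | ∃ y, DLRole.qsem J R x y ∧ y ∈ DLConcept.qsem J C}
  | .nom a => {J.toInterp.iInt a}
  | .atLeast n r b C => {x | (n : ℕ∞) ≤ qsum (J.QU (r, b) x) (DLConcept.qsem J C)}
  | .atMost n r b C => {x | qsum (J.QU (r, b) x) (DLConcept.qsem J C) ≤ (n : ℕ∞)}
  | .exSelf r => J.SE r
/-- Semantics of roles in a QS-interpretation. -/
noncomputable def DLRole.qsem {CN RN IN D : Type} (J : QSInterp CN RN IN D) :
    DLRole CN RN IN → D → D → Prop
  | .name r => J.toInterp.rInt r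
  | .eps => Eq
  | .comp R S => Relation.Comp (DLRole.qsem J R) (DLRole.qsem J S)
  | .runion R S => fun x y => DLRole.qsem J R x y ∨ DLRole.qsem J S x y
  | .star R => Relation.ReflTransGen (DLRole.qsem J R)
  | .test C => fun x y => x = y ∧ x ∈ DLConcept.qsem J C
  | .inv r => fun x y => J.toInterp.rInt r y x
  | .univ => fun _ _ => True
end

/-- The quotient QS-interpretation of a traditional interpretation `I` w.r.t. the
largest `L_Φ`-auto-bisimulation. -/
noncomputable def qsQuot {CN RN IN D : Type} (Φ : DLFeat) (I : Interp CN RN IN D) :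
    QSInterp CN RN IN (Quot (gbisim Φ I)) where
  toInterp := quotInterp Φ I
  QU R q q' := sSup {n | ∃ x, Quot.mk _ x = q ∧
    n = Set.ncard {y | Quot.mk (gbisim Φ I) y = q' ∧ brInt I R x y}}
  SE r := {q | ∃ x, Quot.mk _ x = q ∧ I.rInt r x x}

/-! Invariance of `L_Φ`-concepts under `L_Φ`-bisimulations is a simultaneous induction on
concepts and roles. Conversely, given `y` and finitely many elements, a finite conjunction of
distinguishing concepts is an `L_Φ`-concept that holds at `y` and, among those elements, only at
the ones `≡ y`. Applied to the finitely many successors of `x ≡ x'`, existential restrictions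
over this concept give the forth and back conditions for `≡`, and qualified number restrictions
over it show that `x` and `x'` have equally many successors in every `≡`-class, which yields the
bijections required when `Q ∈ Φ`. -/

universe u

theorem Equiv.exists_of_card_fiber_eq {α β γ : Type*} [Finite α] [Finite β] {f : α → γ}
    {g : β → γ} (h : ∀ c, Nat.card {a // f a = c} = Nat.card {b // g b = c}) :
    ∃ e : α ≃ β, ∀ a, g (e a) = f a :=
  let e := Equiv.ofFiberEquiv fun c => (Finite.card_eq.mp (h c)).some
  ⟨e, Equiv.ofFiberEquiv_map _⟩

theorem Cardinal.mk_subtype_and_congr {α β : Type u} {P p : α → Prop} {Q q : β → Prop}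
    (e : {a // P a} ≃ {b // Q b}) (h : ∀ a, p a.1 ↔ q (e a).1) :
    Cardinal.mk {a // P a ∧ p a} = Cardinal.mk {b // Q b ∧ q b} :=
  Cardinal.mk_congr <| (Equiv.subtypeSubtypeEquivSubtypeInter P p).symm.trans <|
    (e.subtypeEquiv h).trans (Equiv.subtypeSubtypeEquivSubtypeInter Q q)

section

variable {CN RN IN D D' : Type} {Φ : DLFeat}

def brRole (R : RN × Bool) : DLRole CN RN IN :=
  if R.2 then .inv R.1 else .name R.1

theorem brRole_sem (I : Interp CN RN IN D) (R : RN × Bool) (x y : D) :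
    (brRole R : DLRole CN RN IN).sem I x y ↔ brInt I R x y := by
  obtain ⟨r, _ | _⟩ := R <;> rfl

theorem brRole_inL {r : RN} {b : Bool} (hb : b = true → Φ.hasI = true) :
    (brRole (r, b) : DLRole CN RN IN).inL Φ := by
  cases b
  · trivial
  · exact hb rfl

theorem FinBranch.finite_brInt {I : Interp CN RN IN D} (hfb : FinBranch Φ I) {r : RN}
    {b : Bool} (hb : b = true → Φ.hasI = true) (x : D) : {y | brInt I (r, b) x y}.Finite := by
  cases b
  · exact (hfb r x).1
  · exact (hfb r x).2 (hb rfl)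

namespace Bisim

variable {I : Interp CN RN IN D} {I' : Interp CN RN IN D'} {Z : D → D' → Prop}

theorem exists_equiv_brInt (hZ : Bisim Φ I I' Z) (hQ : Φ.hasQ = true) {r : RN} {b : Bool}
    (hb : b = true → Φ.hasI = true) {x : D} {x' : D'} (hxx' : Z x x') :
    ∃ e : {y // brInt I (r, b) x y} ≃ {y' // brInt I' (r, b) x' y'}, ∀ y, Z y.1 (e y).1 := by
  cases b
  · exact hZ.2.2.2.2.2.2.1 hQ r x x' hxx'
  · exact hZ.2.2.2.2.2.2.2.1 hQ (hb rfl) r x x' hxx'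

mutual

theorem mem_sem_iff (hZ : Bisim Φ I I' Z) :
    ∀ (C : DLConcept CN RN IN), C.inL Φ →
      ∀ {x x'}, Z x x' → (x ∈ C.sem I ↔ x' ∈ C.sem I')
  | .atom A, _, x, x', hxx' => hZ.2.1 A x x' hxx'
  | .top, _, _, _, _ => Iff.rfl
  | .bot, _, _, _, _ => Iff.rfl
  | .neg C, hC, _, _, hxx' => not_congr (mem_sem_iff hZ C hC hxx')
  | .conj C C', hC, _, _, hxx' =>
      and_congr (mem_sem_iff hZ C hC.1 hxx') (mem_sem_iff hZ C' hC.2 hxx')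
  | .disj C C', hC, _, _, hxx' =>
      or_congr (mem_sem_iff hZ C hC.1 hxx') (mem_sem_iff hZ C' hC.2 hxx')
  | .all R C, hC, x, x', hxx' => by
      constructor
      · intro hx y' hy'
        obtain ⟨y, hyy', hy⟩ := (sem_forth_back hZ R hC.1).2 x x' y' hxx' hy'
        exact (mem_sem_iff hZ C hC.2 hyy').mp (hx y hy)
      · intro hx' y hy
        obtain ⟨y', hyy', hy'⟩ := (sem_forth_back hZ R hC.1).1 x x' y hxx' hy
        exact (mem_sem_iff hZ C hC.2 hyy').mpr (hx' y' hy')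
  | .ex R C, hC, x, x', hxx' => by
      constructor
      · rintro ⟨y, hy, hyC⟩
        obtain ⟨y', hyy', hy'⟩ := (sem_forth_back hZ R hC.1).1 x x' y hxx' hy
        exact ⟨y', hy', (mem_sem_iff hZ C hC.2 hyy').mp hyC⟩
      · rintro ⟨y', hy', hy'C⟩
        obtain ⟨y, hyy', hy⟩ := (sem_forth_back hZ R hC.1).2 x x' y' hxx' hy'
        exact ⟨y, hy, (mem_sem_iff hZ C hC.2 hyy').mpr hy'C⟩
  | .nom a, hO, x, x', hxx' => hZ.2.2.2.2.2.1 hO a x x' hxx'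
  | .atLeast n r b C, hC, _, _, hxx' => by
      obtain ⟨e, he⟩ := hZ.exists_equiv_brInt hC.1 hC.2.1 hxx'
      simp only [DLConcept.sem, Set.mem_ofPred_eq]
      rw [Cardinal.mk_subtype_and_congr e fun y => mem_sem_iff hZ C hC.2.2 (he y)]
  | .atMost n r b C, hC, _, _, hxx' => by
      obtain ⟨e, he⟩ := hZ.exists_equiv_brInt hC.1 hC.2.1 hxx'
      simp only [DLConcept.sem, Set.mem_ofPred_eq]
      rw [Cardinal.mk_subtype_and_congr e fun y => mem_sem_iff hZ C hC.2.2 (he y)]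
  | .exSelf r, hS, x, x', hxx' => hZ.2.2.2.2.2.2.2.2.2 hS r x x' hxx'

theorem sem_forth_back (hZ : Bisim Φ I I' Z) :
    ∀ R : DLRole CN RN IN, R.inL Φ →
      (∀ x x' y, Z x x' → R.sem I x y → ∃ y', Z y y' ∧ R.sem I' x' y') ∧
      (∀ x x' y', Z x x' → R.sem I' x' y' → ∃ y, Z y y' ∧ R.sem I x y)
  | .name r, _ => ⟨hZ.2.2.1 r, hZ.2.2.2.1 r⟩
  | .eps, _ =>
      ⟨fun _ x' _ hxx' h => ⟨x', h ▸ hxx', rfl⟩,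
        fun x _ _ hxx' h => ⟨x, h ▸ hxx', rfl⟩⟩
  | .comp R S, hRS => by
      constructor
      · rintro x x' y hxx' ⟨z, hxz, hzy⟩
        obtain ⟨z', hzz', hz'⟩ := (sem_forth_back hZ R hRS.1).1 x x' z hxx' hxz
        obtain ⟨y', hyy', hy'⟩ := (sem_forth_back hZ S hRS.2).1 z z' y hzz' hzy
        exact ⟨y', hyy', z', hz', hy'⟩
      · rintro x x' y' hxx' ⟨z', hxz', hz'y'⟩
        obtain ⟨z, hzz', hz⟩ := (sem_forth_back hZ R hRS.1).2 x x' z' hxx' hxz'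
        obtain ⟨y, hyy', hy⟩ := (sem_forth_back hZ S hRS.2).2 z z' y' hzz' hz'y'
        exact ⟨y, hyy', z, hz, hy⟩
  | .runion R S, hRS => by
      obtain ⟨hRf, hRb⟩ := sem_forth_back hZ R hRS.1
      obtain ⟨hSf, hSb⟩ := sem_forth_back hZ S hRS.2
      constructor
      · rintro x x' y hxx' (h | h)
        · obtain ⟨y', hyy', hy'⟩ := hRf x x' y hxx' h
          exact ⟨y', hyy', Or.inl hy'⟩
        · obtain ⟨y', hyy', hy'⟩ := hSf x x' y hxx' h
          exact ⟨y', hyy', Or.inr hy'⟩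
      · rintro x x' y' hxx' (h | h)
        · obtain ⟨y, hyy', hy⟩ := hRb x x' y' hxx' h
          exact ⟨y, hyy', Or.inl hy⟩
        · obtain ⟨y, hyy', hy⟩ := hSb x x' y' hxx' h
          exact ⟨y, hyy', Or.inr hy⟩
  | .star R, hR => by
      obtain ⟨hf, hb⟩ := sem_forth_back hZ R hR
      constructor
      · intro x x' y hxx' hxy
        induction hxy with
        | refl => exact ⟨x', hxx', .refl⟩
        | tail _ hzy ih =>
            obtain ⟨z', hzz', hz'⟩ := ih
            obtain ⟨y', hyy', hy'⟩ := hf _ z' _ hzz' hzy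
            exact ⟨y', hyy', hz'.tail hy'⟩
      · intro x x' y' hxx' hxy'
        induction hxy' with
        | refl => exact ⟨x, hxx', .refl⟩
        | tail _ hzy ih =>
            obtain ⟨z, hzz', hz⟩ := ih
            obtain ⟨y, hyy', hy⟩ := hb z _ _ hzz' hzy
            exact ⟨y, hyy', hz.tail hy⟩
  | .test C, hC => by
      constructor
      · rintro x x' y hxx' ⟨rfl, hxC⟩
        exact ⟨x', hxx', rfl, (mem_sem_iff hZ C hC hxx').mp hxC⟩
      · rintro x x' y' hxx' ⟨rfl, hx'C⟩
        exact ⟨x, hxx', rfl, (mem_sem_iff hZ C hC hxx').mpr hx'C⟩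
  | .inv r, hI => ⟨(hZ.2.2.2.2.1 hI).1 r, (hZ.2.2.2.2.1 hI).2 r⟩
  | .univ, hU =>
      ⟨fun _ _ y _ _ => ((hZ.2.2.2.2.2.2.2.2.1 hU).1 y).imp fun _ h => ⟨h, trivial⟩,
        fun _ _ y' _ _ => ((hZ.2.2.2.2.2.2.2.2.1 hU).2 y').imp fun _ h => ⟨h, trivial⟩⟩

end

end Bisim

namespace LEquiv

variable {I : Interp CN RN IN D} {I' : Interp CN RN IN D'}

theorem refl (x : D) : LEquiv Φ I I x x := fun _ _ => Iff.rfl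

theorem symm {x : D} {x' : D'} (h : LEquiv Φ I I' x x') : LEquiv Φ I' I x' x :=
  fun C hC => (h C hC).symm

theorem trans {D'' : Type} {I'' : Interp CN RN IN D''} {x : D} {x' : D'} {x'' : D''}
    (h : LEquiv Φ I I' x x') (h' : LEquiv Φ I' I'' x' x'') : LEquiv Φ I I'' x x'' :=
  fun C hC => (h C hC).trans (h' C hC)

def setoid (Φ : DLFeat) (I : Interp CN RN IN D) : Setoid D :=
  ⟨LEquiv Φ I I, ⟨refl, symm, trans⟩⟩

theorem exists_concept_of_not {x : D} {x' : D'} (h : ¬ LEquiv Φ I I' x x') :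
    ∃ C : DLConcept CN RN IN, C.inL Φ ∧ x ∈ C.sem I ∧ x' ∉ C.sem I' := by
  obtain ⟨C, hC, hne⟩ :
      ∃ C : DLConcept CN RN IN, C.inL Φ ∧ ¬(x ∈ C.sem I ↔ x' ∈ C.sem I') := by
    simpa only [LEquiv, not_forall, exists_prop] using h
  by_cases hx : x ∈ C.sem I
  · exact ⟨C, hC, hx, fun hx' => hne (iff_of_true hx hx')⟩
  · exact ⟨.neg C, hC, hx, fun hx' => hne (iff_of_false hx hx')⟩

theorem mk_brInt_mem_sem_eq (hQ : Φ.hasQ = true) {r : RN} {b : Bool}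
    (hb : b = true → Φ.hasI = true) {C : DLConcept CN RN IN} (hC : C.inL Φ) {x : D} {x' : D'}
    (hfin : {y | brInt I (r, b) x y}.Finite) (h : LEquiv Φ I I' x x') :
    Cardinal.mk {y // brInt I (r, b) x y ∧ y ∈ C.sem I}
      = Cardinal.mk {y' // brInt I' (r, b) x' y' ∧ y' ∈ C.sem I'} := by
  have : Finite {y // brInt I (r, b) x y ∧ y ∈ C.sem I} :=
    (hfin.subset fun _ hy => hy.1).to_subtype
  set n := Nat.card {y // brInt I (r, b) x y ∧ y ∈ C.sem I}
  have hn : Cardinal.mk {y // brInt I (r, b) x y ∧ y ∈ C.sem I} = n := Nat.cast_card.symm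
  have hle : x' ∈ (DLConcept.atMost n r b C).sem I' :=
    (h (.atMost n r b C) ⟨hQ, hb, hC⟩).mp hn.le
  have hge : x' ∈ (DLConcept.atLeast n r b C).sem I' :=
    (h (.atLeast n r b C) ⟨hQ, hb, hC⟩).mp hn.ge
  exact hn.trans (le_antisymm hge hle)

theorem exists_concept_lequiv_of_mem {S : Set D'} (hS : S.Finite) (y : D) :
    ∃ C : DLConcept CN RN IN, C.inL Φ ∧ y ∈ C.sem I ∧
      ∀ z ∈ S, z ∈ C.sem I' → LEquiv Φ I I' y z := by
  induction S, hS using Set.Finite.induction_on with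
  | empty => exact ⟨.top, trivial, trivial, fun _ hz => absurd hz (Set.notMem_empty _)⟩
  | @insert z S _ _ ih =>
    obtain ⟨C, hC, hyC, hsep⟩ := ih
    by_cases hyz : LEquiv Φ I I' y z
    · refine ⟨C, hC, hyC, ?_⟩
      rintro w (rfl | hw) hwC
      exacts [hyz, hsep w hw hwC]
    · obtain ⟨C', hC', hyC', hzC'⟩ := exists_concept_of_not hyz
      refine ⟨.conj C C', ⟨hC, hC'⟩, ⟨hyC, hyC'⟩, ?_⟩
      rintro w (rfl | hw) hwC
      exacts [absurd hwC.2 hzC', hsep w hw hwC.1]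

theorem exists_brInt {r : RN} {b : Bool} (hb : b = true → Φ.hasI = true) {x y : D} {x' : D'}
    (hfin : {y' | brInt I' (r, b) x' y'}.Finite) (h : LEquiv Φ I I' x x')
    (hxy : brInt I (r, b) x y) : ∃ y', LEquiv Φ I I' y y' ∧ brInt I' (r, b) x' y' := by
  obtain ⟨C, hC, hyC, hsep⟩ := exists_concept_lequiv_of_mem (I := I) hfin y
  obtain ⟨y', hxy', hy'C⟩ : x' ∈ (DLConcept.ex (brRole (r, b)) C).sem I' :=
    (h (.ex (brRole (r, b)) C) ⟨brRole_inL hb, hC⟩).mp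
      ⟨y, (brRole_sem I _ x y).mpr hxy, hyC⟩
  rw [brRole_sem] at hxy'
  exact ⟨y', hsep y' hxy' hy'C, hxy'⟩

theorem card_brInt_fiber_eq (hfb : FinBranch Φ I) (hQ : Φ.hasQ = true) {r : RN} {b : Bool}
    (hb : b = true → Φ.hasI = true) {x x' : D} (h : LEquiv Φ I I x x')
    (q : Quotient (setoid Φ I)) :
    Nat.card {w : {w // brInt I (r, b) x w} // ⟦w.1⟧ = q}
      = Nat.card {w : {w // brInt I (r, b) x' w} // ⟦w.1⟧ = q} := by
  induction q using Quotient.inductionOn with | h y => ?_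
  obtain ⟨C, hC, hyC, hsep⟩ := exists_concept_lequiv_of_mem (I := I)
    ((hfb.finite_brInt hb x).union (hfb.finite_brInt hb x')) y
  have fiber (u : D)
      (hu : ∀ w, brInt I (r, b) u w → brInt I (r, b) x w ∨ brInt I (r, b) x' w) :
      {w : {w // brInt I (r, b) u w} // Quotient.mk (setoid Φ I) w.1 = ⟦y⟧}
        ≃ {w // brInt I (r, b) u w ∧ w ∈ C.sem I} :=
    (Equiv.subtypeSubtypeEquivSubtypeInter _ _).trans <| Equiv.subtypeEquivRight fun w =>
      and_congr_right fun hw => (Quotient.eq (r := setoid Φ I)).trans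
        ⟨fun hwy => (hwy C hC).mpr hyC, fun hwC => (hsep w (hu w hw) hwC).symm⟩
  exact Nat.card_congr <| (fiber x fun _ => Or.inl).trans <|
    (Cardinal.eq.mp (mk_brInt_mem_sem_eq hQ hb hC (hfb.finite_brInt hb x) h)).some.trans
      (fiber x' fun _ => Or.inr).symm

theorem exists_equiv_brInt (hfb : FinBranch Φ I) (hQ : Φ.hasQ = true) {r : RN} {b : Bool}
    (hb : b = true → Φ.hasI = true) {x x' : D} (h : LEquiv Φ I I x x') :
    ∃ e : {w // brInt I (r, b) x w} ≃ {w // brInt I (r, b) x' w},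
      ∀ w, LEquiv Φ I I w.1 (e w).1 := by
  have : Finite {w // brInt I (r, b) x w} := (hfb.finite_brInt hb x).to_subtype
  have : Finite {w // brInt I (r, b) x' w} := (hfb.finite_brInt hb x').to_subtype
  obtain ⟨e, he⟩ := Equiv.exists_of_card_fiber_eq (card_brInt_fiber_eq hfb hQ (r := r) hb h)
  exact ⟨e, fun w => (Quotient.exact (he w)).symm⟩

end LEquiv

end

/-- For a finitely branching interpretation, `L_Φ`-equivalence is the
largest `L_Φ`-auto-bisimulation. -/
theorem lequiv_is_largest_autobisim {CN RN IN D : Type} (Φ : DLFeat)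
    (I : Interp CN RN IN D) (hfb : FinBranch Φ I) :
    Bisim Φ I I (LEquiv Φ I I) ∧
      ∀ Z : D → D → Prop, Bisim Φ I I Z → ∀ x y, Z x y → LEquiv Φ I I x y := by
  have forth {b : Bool} (hb : b = true → Φ.hasI = true) (r : RN) (x x' y : D)
      (h : LEquiv Φ I I x x') (hxy : brInt I (r, b) x y) :
      ∃ y', LEquiv Φ I I y y' ∧ brInt I (r, b) x' y' :=
    h.exists_brInt hb (hfb.finite_brInt hb x') hxy
  have back {b : Bool} (hb : b = true → Φ.hasI = true) (r : RN) (x x' y' : D)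
      (h : LEquiv Φ I I x x') (hxy' : brInt I (r, b) x' y') :
      ∃ y, LEquiv Φ I I y y' ∧ brInt I (r, b) x y :=
    (forth hb r x' x y' h.symm hxy').imp fun _ hy => ⟨hy.1.symm, hy.2⟩
  refine ⟨⟨fun _ => .refl _, fun A _ _ h => h (.atom A) trivial,
    forth (b := false) nofun, back (b := false) nofun,
    fun hI => ⟨forth (b := true) fun _ => hI, back (b := true) fun _ => hI⟩,
    fun hO a _ _ h => h (.nom a) hO,
    fun hQ r _ _ h => h.exists_equiv_brInt hfb hQ (b := false) nofun,
    fun hQ hI r _ _ h => h.exists_equiv_brInt hfb hQ (b := true) fun _ => hI,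
    fun _ => ⟨fun x => ⟨x, .refl x⟩, fun x => ⟨x, .refl x⟩⟩,
    fun hS r _ _ h => h (.exSelf r) hS⟩, fun Z hZ x y hxy C hC => hZ.mem_sem_iff C hC hxy⟩
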